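/- arXiv:1912.09871 — 9 statements merged into one kernel-verified Lean document; each statement's English description precedes it below -/
import Mathlib

section
/- Let A be a real n×n matrix, ρ > 0 a real number, k̃ ≥ 1 a natural number with ‖A^{k̃}‖₂ ρ^{-k̃} < 1, and α ≥ 0 a real number. Then the exponential stability bound (for all x ∈ ℝⁿ and all k ∈ ℕ₀: |A^k x| ≤ α ρ^k |x|) holds if and only if α ≥ α_min, where α_min := max_{j ∈ {0,1,…,k̃−1}} ‖A^j‖₂ ρ^{-j}. -/
/-!
Write `T` for the operator of `A`. The bound `|Aᵏx| ≤ α ρᵏ |x|` for all `x` says `‖Tᵏ‖ ≤ α ρᵏ`.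
Since `‖T^k̃‖ ≤ ρ^k̃` and `‖Tᵏ‖ ≤ ‖T^k̃‖ ‖T^(k - k̃)‖`, the bound for all `k` follows by strong
induction from the bound for `k < k̃`, which is exactly `α_min ≤ α`.
-/

/-- The spectral norm of a real `n × n` matrix: the operator norm induced by
the Euclidean norm on `ℝⁿ`. -/
noncomputable def specNorm {n : ℕ} (A : Matrix (Fin n) (Fin n) ℝ) : ℝ :=
  ‖(Matrix.toEuclideanCLM (𝕜 := ℝ) A : EuclideanSpace ℝ (Fin n) →L[ℝ] EuclideanSpace ℝ (Fin n))‖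

theorem norm_pow_le_mul_pow_of_forall_lt {R : Type*} [SeminormedRing R] {a : R} {ρ α : ℝ}
    {m : ℕ} (hm : 0 < m) (hρ : 0 ≤ ρ) (ha : ‖a ^ m‖ ≤ ρ ^ m)
    (hlt : ∀ j < m, ‖a ^ j‖ ≤ α * ρ ^ j) (k : ℕ) : ‖a ^ k‖ ≤ α * ρ ^ k := by
  induction k using Nat.strong_induction_on with
  | _ k ih =>
    rcases lt_or_ge k m with hkm | hmk
    · exact hlt k hkm
    · obtain ⟨l, rfl⟩ := Nat.exists_eq_add_of_le hmk
      calc ‖a ^ (m + l)‖ ≤ ‖a ^ m‖ * ‖a ^ l‖ := by rw [pow_add]; exact norm_mul_le _ _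
        _ ≤ ρ ^ m * (α * ρ ^ l) :=
          mul_le_mul ha (ih l (by omega)) (norm_nonneg _) (pow_nonneg hρ m)
        _ = α * ρ ^ (m + l) := by ring

theorem forall_norm_pow_le_iff_forall_lt {R : Type*} [SeminormedRing R] {a : R} {ρ α : ℝ}
    {m : ℕ} (hm : 0 < m) (hρ : 0 ≤ ρ) (ha : ‖a ^ m‖ ≤ ρ ^ m) :
    (∀ k, ‖a ^ k‖ ≤ α * ρ ^ k) ↔ ∀ j < m, ‖a ^ j‖ ≤ α * ρ ^ j :=
  ⟨fun h j _ => h j, norm_pow_le_mul_pow_of_forall_lt hm hρ ha⟩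

theorem specNorm_pow {n : ℕ} (A : Matrix (Fin n) (Fin n) ℝ) (j : ℕ) :
    specNorm (A ^ j) = ‖Matrix.toEuclideanCLM (𝕜 := ℝ) A ^ j‖ := by
  rw [specNorm, map_pow]

/-- With `ρ > 0`, `k̃ ≥ 1` such that `‖A^k̃‖₂ ρ^{-k̃} < 1`, and `α ≥ 0`, the exponential
stability bound `|A^k x| ≤ α ρ^k |x|` (for all `x`, `k`) holds iff `α ≥ α_min`, where
`α_min = max_{j < k̃} ‖A^j‖₂ ρ^{-j}`. -/
theorem stmt2 {n : ℕ} (A : Matrix (Fin n) (Fin n) ℝ) (ρ : ℝ) (hρ : 0 < ρ)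
    (ktil : ℕ) (hk : 1 ≤ ktil)
    (h : specNorm (A ^ ktil) * (ρ ^ ktil)⁻¹ < 1)
    (α : ℝ) (hα : 0 ≤ α) :
    (∀ (x : EuclideanSpace ℝ (Fin n)) (k : ℕ),
        ‖Matrix.toEuclideanCLM (𝕜 := ℝ) (A ^ k) x‖ ≤ α * ρ ^ k * ‖x‖) ↔
      (Finset.range ktil).sup' (Finset.nonempty_range_iff.mpr (by omega))
        (fun j => specNorm (A ^ j) * (ρ ^ j)⁻¹) ≤ α := by
  set T := Matrix.toEuclideanCLM (𝕜 := ℝ) A with hT_def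
  have hT : ‖T ^ ktil‖ ≤ ρ ^ ktil := by
    rw [← specNorm_pow]
    simpa using ((mul_inv_lt_iff₀ (pow_pos hρ ktil)).mp h).le
  calc _ ↔ ∀ k, ‖T ^ k‖ ≤ α * ρ ^ k := by
        rw [forall_comm]
        refine forall_congr' fun k => ?_
        rw [ContinuousLinearMap.opNorm_le_iff (by positivity), map_pow]
    _ ↔ ∀ j < ktil, ‖T ^ j‖ ≤ α * ρ ^ j :=
        forall_norm_pow_le_iff_forall_lt (by omega) hρ.le hT
    _ ↔ _ := by
        simp only [Finset.sup'_le_iff, Finset.mem_range, specNorm_pow, ← hT_def,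
          mul_inv_le_iff₀ (pow_pos hρ _)]
end

section
/- (Robustness-based abstraction for weak execution, linear case.) Let Σ be a set of execution modes containing a distinguished element 0, and for each σ ∈ Σ let A_σ be a real n×n matrix. Define γ_σ := ‖A_σ − A_0‖₂ (so γ_0 = 0). Suppose ρ ∈ (0,1) and α ≥ 1 satisfy |A_0^k x| ≤ α ρ^k |x| for all x ∈ ℝⁿ and k ∈ ℕ₀, and let β ≥ α. Then for every mode sequence σ : ℕ₀ → Σ, every disturbance w : ℕ₀ → ℝⁿ, and every x_0 ∈ ℝⁿ, the solution of x_{k+1} = A_{σ_k} x_k + w_k satisfies |x_k| ≤ v̄_k for all k ∈ ℕ₀, where v̄_0 = α |x_0| and v̄_{k+1} = (ρ + β γ_{σ_k}) v̄_k + β |w_k|. -/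
/-!
Adapted norm: for `ρ > 0` the bound `|T^k x| ≤ α ρ^k |x|` makes `V x := sup_k ρ^{-k} |T^k x|`
a seminorm with `|x| ≤ V x ≤ α |x|` in which `T` contracts by the factor `ρ`. Along a solution
of `x_{k+1} = (T + B_k) x_k + w_k` this gives
`V x_{k+1} ≤ ρ V x_k + α (‖B_k‖ |x_k| + |w_k|) ≤ (ρ + β ‖B_k‖) V x_k + β |w_k|`,
so `|x_k| ≤ V x_k ≤ v̄_k` by induction on `k`.
-/

noncomputable def adaptedNorm {E : Type*} [SeminormedAddCommGroup E] [NormedSpace ℝ E]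
    (T : E →L[ℝ] E) (ρ : ℝ) (x : E) : ℝ :=
  ⨆ k : ℕ, ‖(T ^ k) x‖ / ρ ^ k

section adaptedNorm

variable {E : Type*} [SeminormedAddCommGroup E] [NormedSpace ℝ E] {T : E →L[ℝ] E} {ρ α : ℝ}
  (hρ : 0 < ρ) (hT : ∀ (x : E) (k : ℕ), ‖(T ^ k) x‖ ≤ α * ρ ^ k * ‖x‖)
include hρ hT

theorem norm_pow_apply_div_le (x : E) (k : ℕ) : ‖(T ^ k) x‖ / ρ ^ k ≤ α * ‖x‖ := by
  rw [div_le_iff₀ (pow_pos hρ k)]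
  linarith [hT x k]

theorem bddAbove_range_norm_pow_apply_div (x : E) : BddAbove (Set.range fun k : ℕ => ‖(T ^ k) x‖ / ρ ^ k) :=
  ⟨α * ‖x‖, Set.forall_mem_range.2 (norm_pow_apply_div_le hρ hT x)⟩

theorem adaptedNorm_le_mul_norm (x : E) : adaptedNorm T ρ x ≤ α * ‖x‖ :=
  ciSup_le (norm_pow_apply_div_le hρ hT x)

theorem norm_le_adaptedNorm (x : E) : ‖x‖ ≤ adaptedNorm T ρ x :=
  calc ‖x‖ = ‖(T ^ 0) x‖ / ρ ^ 0 := by simp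
    _ ≤ adaptedNorm T ρ x := le_ciSup (bddAbove_range_norm_pow_apply_div hρ hT x) 0

theorem adaptedNorm_add_le (x y : E) :
    adaptedNorm T ρ (x + y) ≤ adaptedNorm T ρ x + adaptedNorm T ρ y :=
  ciSup_le fun k =>
    calc ‖(T ^ k) (x + y)‖ / ρ ^ k ≤ ‖(T ^ k) x‖ / ρ ^ k + ‖(T ^ k) y‖ / ρ ^ k := by
          rw [map_add, ← add_div]
          gcongr
          exact norm_add_le _ _
      _ ≤ adaptedNorm T ρ x + adaptedNorm T ρ y :=
          add_le_add (le_ciSup (bddAbove_range_norm_pow_apply_div hρ hT x) k) (le_ciSup (bddAbove_range_norm_pow_apply_div hρ hT y) k)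

theorem adaptedNorm_apply_le (x : E) : adaptedNorm T ρ (T x) ≤ ρ * adaptedNorm T ρ x :=
  ciSup_le fun k =>
    calc ‖(T ^ k) (T x)‖ / ρ ^ k = ρ * (‖(T ^ (k + 1)) x‖ / ρ ^ (k + 1)) := by
          rw [pow_succ T, mul_apply_eq_comp]
          field_simp
          ring
      _ ≤ ρ * adaptedNorm T ρ x := by
          gcongr
          exact le_ciSup (bddAbove_range_norm_pow_apply_div hρ hT x) (k + 1)

theorem adaptedNorm_apply_add_le (x y : E) :
    adaptedNorm T ρ (T x + y) ≤ ρ * adaptedNorm T ρ x + α * ‖y‖ :=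
  (adaptedNorm_add_le hρ hT _ _).trans (add_le_add (adaptedNorm_apply_le hρ hT x) (adaptedNorm_le_mul_norm hρ hT y))

theorem adaptedNorm_perturbed_apply_le {β : ℝ} (hα : 0 ≤ α) (hαβ : α ≤ β) (B : E →L[ℝ] E) (x w : E) :
    adaptedNorm T ρ ((T + B) x + w) ≤ (ρ + β * ‖B‖) * adaptedNorm T ρ x + β * ‖w‖ := by
  have hV : ‖x‖ ≤ adaptedNorm T ρ x := norm_le_adaptedNorm hρ hT x
  have hB : ‖B x + w‖ ≤ ‖B‖ * ‖x‖ + ‖w‖ :=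
    (norm_add_le _ _).trans (by gcongr; exact B.le_opNorm x)
  calc adaptedNorm T ρ ((T + B) x + w) = adaptedNorm T ρ (T x + (B x + w)) := by
        rw [add_apply, add_assoc]
    _ ≤ ρ * adaptedNorm T ρ x + α * (‖B‖ * ‖x‖ + ‖w‖) := by
        grw [adaptedNorm_apply_add_le hρ hT, hB]
    _ ≤ ρ * adaptedNorm T ρ x + β * (‖B‖ * adaptedNorm T ρ x + ‖w‖) := by
        have hBx : α * (‖B‖ * ‖x‖) ≤ β * (‖B‖ * adaptedNorm T ρ x) :=
          mul_le_mul hαβ (by gcongr) (by positivity) (hα.trans hαβ)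
        have hw : α * ‖w‖ ≤ β * ‖w‖ := by gcongr
        linarith
    _ = (ρ + β * ‖B‖) * adaptedNorm T ρ x + β * ‖w‖ := by ring

end adaptedNorm

theorem norm_le_of_perturbed_recursion {E : Type*} [SeminormedAddCommGroup E]
    [NormedSpace ℝ E] {T : E →L[ℝ] E} {ρ α β : ℝ} (hρ : 0 < ρ) (hα : 0 ≤ α) (hαβ : α ≤ β)
    (hT : ∀ (x : E) (k : ℕ), ‖(T ^ k) x‖ ≤ α * ρ ^ k * ‖x‖)
    (B : ℕ → E →L[ℝ] E) (w x : ℕ → E) (hx : ∀ k, x (k + 1) = (T + B k) (x k) + w k)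
    (v : ℕ → ℝ) (hv0 : v 0 = α * ‖x 0‖)
    (hv : ∀ k, v (k + 1) = (ρ + β * ‖B k‖) * v k + β * ‖w k‖) (k : ℕ) :
    ‖x k‖ ≤ v k := by
  refine (norm_le_adaptedNorm hρ hT _).trans ?_
  induction k with
  | zero => exact hv0 ▸ adaptedNorm_le_mul_norm hρ hT _
  | succ k ih =>
    rw [hx, hv]
    refine (adaptedNorm_perturbed_apply_le hρ hT hα hαβ _ _ _).trans ?_
    have hβ : 0 ≤ β := hα.trans hαβ
    gcongr

theorem stmt5_general {n : ℕ} {S : Type*} (s0 : S) (A : S → Matrix (Fin n) (Fin n) ℝ)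
    (ρ α β : ℝ) (hρ0 : 0 < ρ) (hα : 1 ≤ α)
    (hnom : ∀ (x : EuclideanSpace ℝ (Fin n)) (k : ℕ),
      ‖Matrix.toEuclideanCLM (𝕜 := ℝ) ((A s0) ^ k) x‖ ≤ α * ρ ^ k * ‖x‖)
    (hβ : α ≤ β)
    (σ : ℕ → S) (w x : ℕ → EuclideanSpace ℝ (Fin n))
    (hx : ∀ k, x (k + 1) = Matrix.toEuclideanCLM (𝕜 := ℝ) (A (σ k)) (x k) + w k)
    (v : ℕ → ℝ) (hv0 : v 0 = α * ‖x 0‖)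
    (hv : ∀ k, v (k + 1) = (ρ + β * specNorm (A (σ k) - A s0)) * v k + β * ‖w k‖) :
    ∀ k, ‖x k‖ ≤ v k := by
  let L : S → EuclideanSpace ℝ (Fin n) →L[ℝ] EuclideanSpace ℝ (Fin n) :=
    fun s => Matrix.toEuclideanCLM (𝕜 := ℝ) (A s)
  refine norm_le_of_perturbed_recursion hρ0 (zero_le_one.trans hα) hβ (T := L s0) ?_
    (fun k => L (σ k) - L s0) w x ?_ v hv0 ?_
  · simpa only [map_pow] using hnom
  · simpa only [add_sub_cancel] using hx
  · simpa only [specNorm, map_sub] using hv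

/-- Robustness-based abstraction for weak execution (linear case): with nominal mode `s0`,
`γ_σ = ‖A_σ − A_{s0}‖₂`, nominal exponential stability with `ρ ∈ (0,1)`, `α ≥ 1`, and
`β ≥ α`, every solution of `x_{k+1} = A_{σ_k} x_k + w_k` satisfies `|x_k| ≤ v̄_k`, where
`v̄_0 = α |x_0|` and `v̄_{k+1} = (ρ + β γ_{σ_k}) v̄_k + β |w_k|`. -/
theorem stmt5 {n : ℕ} {S : Type*} (s0 : S) (A : S → Matrix (Fin n) (Fin n) ℝ)
    (ρ α β : ℝ) (hρ0 : 0 < ρ) (hρ1 : ρ < 1) (hα : 1 ≤ α)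
    (hnom : ∀ (x : EuclideanSpace ℝ (Fin n)) (k : ℕ),
      ‖Matrix.toEuclideanCLM (𝕜 := ℝ) ((A s0) ^ k) x‖ ≤ α * ρ ^ k * ‖x‖)
    (hβ : α ≤ β)
    (σ : ℕ → S) (w x : ℕ → EuclideanSpace ℝ (Fin n))
    (hx : ∀ k, x (k + 1) = Matrix.toEuclideanCLM (𝕜 := ℝ) (A (σ k)) (x k) + w k)
    (v : ℕ → ℝ) (hv0 : v 0 = α * ‖x 0‖)
    (hv : ∀ k, v (k + 1) = (ρ + β * specNorm (A (σ k) - A s0)) * v k + β * ‖w k‖) :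
    ∀ k, ‖x k‖ ≤ v k :=
  stmt5_general s0 A ρ α β hρ0 hα hnom hβ σ w x hx v hv0 hv
end

section
/- (Lyapunov-function-based abstraction for weak execution.) Let V : ℝⁿ → ℝ satisfy: V(x) > 0 for x ≠ 0 and V(0) = 0 (positive definite); there exists γ ≥ 1 with √V(a+b) ≤ √V(a) + γ √V(b) for all a, b ∈ ℝⁿ (weak subadditivity); there exist c₁, c₂ > 0 with c₁ √V(x) ≤ |x| ≤ c₂ √V(x) for all x ∈ ℝⁿ (norm equivalence). Let Σ be a set, and for each σ ∈ Σ let f_σ : ℝⁿ → ℝⁿ and ρ_σ ≥ 0 satisfy √V(f_σ(x)) ≤ ρ_σ √V(x) for all x ∈ ℝⁿ. Let α ≥ c₂/c₁ and β ≥ γ c₂/c₁. Then for every mode sequence σ : ℕ₀ → Σ, every disturbance w : ℕ₀ → ℝⁿ, and every x_0 ∈ ℝⁿ, the solution of x_{k+1} = f_{σ_k}(x_k) + w_k satisfies |x_k| ≤ v̄_k for all k ∈ ℕ₀, where v̄_0 = α |x_0| and v̄_{k+1} = ρ_{σ_k} v̄_k + β |w_k|. -/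
/-! The function `√V` is a gauge for the state: it loses at most the factor `ρ_σ` along each mode
and grows by at most `γ/c₁ ‖w‖` under a disturbance `w`, so `c₂ √V(x_k)` is dominated by the
linear recursion defining `v̄`, and `‖x_k‖ ≤ c₂ √V(x_k)`. -/

theorem le_of_succ_le_mul_add {u v a b : ℕ → ℝ} (ha : ∀ k, 0 ≤ a k) (h0 : u 0 ≤ v 0)
    (hu : ∀ k, u (k + 1) ≤ a k * u k + b k) (hv : ∀ k, v (k + 1) = a k * v k + b k) :
    ∀ k, u k ≤ v k
  | 0 => h0
  | k + 1 => by
    rw [hv]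
    exact (hu k).trans (by gcongr; exacts [ha k, le_of_succ_le_mul_add ha h0 hu hv k])

theorem map_add_le_add_div_mul_norm {E : Type*} [Add E] [Norm E] {p : E → ℝ} {γ c₁ : ℝ}
    (hγ : 0 ≤ γ) (hc₁ : 0 < c₁) (hsub : ∀ a b, p (a + b) ≤ p a + γ * p b)
    (hlow : ∀ x, c₁ * p x ≤ ‖x‖) (y w : E) :
    p (y + w) ≤ p y + γ / c₁ * ‖w‖ := by
  have hw : p w ≤ ‖w‖ / c₁ := (le_div_iff₀' hc₁).2 (hlow w)
  calc p (y + w) ≤ p y + γ * p w := hsub y w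
    _ ≤ p y + γ * (‖w‖ / c₁) := by gcongr
    _ = p y + γ / c₁ * ‖w‖ := by ring

theorem stmt6_general {n : ℕ} {S : Type*} (V : EuclideanSpace ℝ (Fin n) → ℝ)
    (γ : ℝ) (hγ : 1 ≤ γ)
    (hsub : ∀ a b : EuclideanSpace ℝ (Fin n),
      Real.sqrt (V (a + b)) ≤ Real.sqrt (V a) + γ * Real.sqrt (V b))
    (c₁ c₂ : ℝ) (hc₁ : 0 < c₁) (hc₂ : 0 < c₂)
    (hequiv : ∀ x : EuclideanSpace ℝ (Fin n),
      c₁ * Real.sqrt (V x) ≤ ‖x‖ ∧ ‖x‖ ≤ c₂ * Real.sqrt (V x))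
    (f : S → EuclideanSpace ℝ (Fin n) → EuclideanSpace ℝ (Fin n))
    (ρ : S → ℝ) (hρ : ∀ s, 0 ≤ ρ s)
    (hgain : ∀ (s : S) (x : EuclideanSpace ℝ (Fin n)),
      Real.sqrt (V (f s x)) ≤ ρ s * Real.sqrt (V x))
    (α β : ℝ) (hα : c₂ / c₁ ≤ α) (hβ : γ * (c₂ / c₁) ≤ β)
    (σ : ℕ → S) (w x : ℕ → EuclideanSpace ℝ (Fin n))
    (hx : ∀ k, x (k + 1) = f (σ k) (x k) + w k)
    (v : ℕ → ℝ) (hv0 : v 0 = α * ‖x 0‖)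
    (hv : ∀ k, v (k + 1) = ρ (σ k) * v k + β * ‖w k‖) :
    ∀ k, ‖x k‖ ≤ v k := by
  have hstep := map_add_le_add_div_mul_norm (by linarith) hc₁ hsub (fun x ↦ (hequiv x).1)
  have h0 : c₂ * √(V (x 0)) ≤ v 0 :=
    calc c₂ * √(V (x 0)) ≤ c₂ * (‖x 0‖ / c₁) := by
          gcongr; exact (le_div_iff₀' hc₁).2 (hequiv _).1
      _ = c₂ / c₁ * ‖x 0‖ := by ring
      _ ≤ v 0 := by rw [hv0]; gcongr
  have hsucc (k : ℕ) : c₂ * √(V (x (k + 1))) ≤ ρ (σ k) * (c₂ * √(V (x k))) + β * ‖w k‖ :=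
    calc c₂ * √(V (x (k + 1)))
        ≤ c₂ * (ρ (σ k) * √(V (x k)) + γ / c₁ * ‖w k‖) := by
          rw [hx]; gcongr; exact (hstep _ _).trans (by gcongr; exact hgain _ _)
      _ = ρ (σ k) * (c₂ * √(V (x k))) + γ * (c₂ / c₁) * ‖w k‖ := by ring
      _ ≤ ρ (σ k) * (c₂ * √(V (x k))) + β * ‖w k‖ := by gcongr
  exact fun k ↦ (hequiv (x k)).2.trans (le_of_succ_le_mul_add (u := fun k ↦ c₂ * √(V (x k)))
    (fun k ↦ hρ _) h0 hsucc hv k)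

/-- Lyapunov-function-based abstraction for weak execution: with a positive definite,
weakly subadditive, norm-equivalent function `V`, mode dynamics `f_σ` with V-gain
bounds `ρ_σ`, and `α ≥ c₂/c₁`, `β ≥ γ c₂/c₁`, every solution of
`x_{k+1} = f_{σ_k}(x_k) + w_k` satisfies `|x_k| ≤ v̄_k`, where `v̄_0 = α |x_0|` and
`v̄_{k+1} = ρ_{σ_k} v̄_k + β |w_k|`. -/
theorem stmt6 {n : ℕ} {S : Type*} (V : EuclideanSpace ℝ (Fin n) → ℝ)
    (hpos : ∀ x : EuclideanSpace ℝ (Fin n), x ≠ 0 → 0 < V x) (hzero : V 0 = 0)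
    (γ : ℝ) (hγ : 1 ≤ γ)
    (hsub : ∀ a b : EuclideanSpace ℝ (Fin n),
      Real.sqrt (V (a + b)) ≤ Real.sqrt (V a) + γ * Real.sqrt (V b))
    (c₁ c₂ : ℝ) (hc₁ : 0 < c₁) (hc₂ : 0 < c₂)
    (hequiv : ∀ x : EuclideanSpace ℝ (Fin n),
      c₁ * Real.sqrt (V x) ≤ ‖x‖ ∧ ‖x‖ ≤ c₂ * Real.sqrt (V x))
    (f : S → EuclideanSpace ℝ (Fin n) → EuclideanSpace ℝ (Fin n))
    (ρ : S → ℝ) (hρ : ∀ s, 0 ≤ ρ s)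
    (hgain : ∀ (s : S) (x : EuclideanSpace ℝ (Fin n)),
      Real.sqrt (V (f s x)) ≤ ρ s * Real.sqrt (V x))
    (α β : ℝ) (hα : c₂ / c₁ ≤ α) (hβ : γ * (c₂ / c₁) ≤ β)
    (σ : ℕ → S) (w x : ℕ → EuclideanSpace ℝ (Fin n))
    (hx : ∀ k, x (k + 1) = f (σ k) (x k) + w k)
    (v : ℕ → ℝ) (hv0 : v 0 = α * ‖x 0‖)
    (hv : ∀ k, v (k + 1) = ρ (σ k) * v k + β * ‖w k‖) :
    ∀ k, ‖x k‖ ≤ v k :=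
  stmt6_general V γ hγ hsub c₁ c₂ hc₁ hc₂ hequiv f ρ hρ hgain α β hα hβ σ w x hx v hv0 hv
end

section
/- (Skip-count bound for (m,K)-weak execution.) Let K ≥ 1 and m̄ ≥ 0 be natural numbers and let σ : ℕ₀ → {0,1} satisfy the (m,K)-constraint: for every k ∈ ℕ₀, Σ_{i=k}^{k+K−1} σ_i ≤ m̄. Then for every k ∈ ℕ₀: Σ_{i=0}^{k−1} σ_i ≤ m̄ ⌊k/K⌋ + min(m̄, k mod K). -/
/-!
Cut `[0, k)` into the `⌊k/K⌋` full windows `[qK, qK + K)`, each carrying at most `m̄` skips,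
followed by the partial window of length `k mod K`. The partial window lies inside a full
window, so it carries at most `m̄` skips, and it has `k mod K` terms, each at most `1`.
-/

open Finset

theorem sum_range_mul_le_nsmul_of_forall_sum_Ico_le {M : Type*} [AddCommMonoid M]
    [PartialOrder M] [IsOrderedAddMonoid M] {σ : ℕ → M} {K : ℕ} {m : M}
    (h : ∀ k, ∑ i ∈ Ico k (k + K), σ i ≤ m) (q : ℕ) :
    ∑ i ∈ range (q * K), σ i ≤ q • m := by
  induction q with
  | zero => simp
  | succ q ih =>
    rw [Nat.succ_mul, ← sum_range_add_sum_Ico σ (Nat.le_add_right _ K), succ_nsmul]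
    exact add_le_add ih (h _)

theorem sum_Ico_le_min_of_forall_sum_Ico_le {σ : ℕ → ℕ} (hσ : ∀ i, σ i ≤ 1) {K m : ℕ}
    (h : ∀ k, ∑ i ∈ Ico k (k + K), σ i ≤ m) (a : ℕ) {r : ℕ} (hr : r ≤ K) :
    ∑ i ∈ Ico a (a + r), σ i ≤ min m r := by
  refine le_min ?_ ?_
  · calc ∑ i ∈ Ico a (a + r), σ i
        ≤ ∑ i ∈ Ico a (a + K), σ i := sum_le_sum_of_subset (Ico_subset_Ico_right (by omega))
      _ ≤ m := h a
  · simpa using sum_le_card_nsmul (Ico a (a + r)) σ 1 fun i _ ↦ hσ i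

/-- Skip-count bound for `(m,K)`-weak execution: if any `K` consecutive terms of the
binary sequence `σ` sum to at most `m̄`, then `Σ_{i<k} σ_i ≤ m̄ ⌊k/K⌋ + min(m̄, k mod K)`. -/
theorem stmt8 (K mbar : ℕ) (hK : 1 ≤ K)
    (σ : ℕ → ℕ) (hσ : ∀ i, σ i ≤ 1)
    (hmk : ∀ k, ∑ i ∈ Finset.Ico k (k + K), σ i ≤ mbar) :
    ∀ k, ∑ i ∈ Finset.range k, σ i ≤ mbar * (k / K) + min mbar (k % K) := by
  intro k
  have hk : k / K * K + k % K = k := Nat.div_add_mod' k K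
  calc ∑ i ∈ range k, σ i
      = ∑ i ∈ range (k / K * K), σ i + ∑ i ∈ Ico (k / K * K) (k / K * K + k % K), σ i := by
        rw [sum_range_add_sum_Ico σ (Nat.le_add_right _ _), hk]
    _ ≤ (k / K) • mbar + min mbar (k % K) :=
        add_le_add (sum_range_mul_le_nsmul_of_forall_sum_Ico_le hmk _)
          (sum_Ico_le_min_of_forall_sum_Ico_le hσ hmk _ (Nat.mod_lt k hK).le)
    _ = mbar * (k / K) + min mbar (k % K) := by rw [smul_eq_mul, mul_comm]
end

section
/- (Tightness of the skip-count bound.) Let K ≥ 1 and 0 ≤ m̄ ≤ K be natural numbers and define σ : ℕ₀ → {0,1} by σ_k = 1 if k mod K < m̄ and σ_k = 0 otherwise. Then σ satisfies the (m,K)-constraint (for every k, Σ_{i=k}^{k+K−1} σ_i ≤ m̄), and for every k ∈ ℕ₀ the skip count attains the bound with equality: Σ_{i=0}^{k−1} σ_i = m̄ ⌊k/K⌋ + min(m̄, k mod K). -/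
/-!
Passing from `k` to `k + 1` advances the residue `k % K` by one, wrapping to `0` and raising
`k / K` by one exactly when `K ∣ k + 1`; the number of ones grows by one precisely while the
residue is below `m̄`, which gives the closed form by induction. A window of length `K` raises
`k / K` by one and leaves `k % K` unchanged, so by the closed form it contains exactly `m̄` ones.
-/

open Finset

theorem sum_range_ite_mod_lt {K m : ℕ} (hm : m ≤ K) (k : ℕ) :
    ∑ i ∈ range k, (if i % K < m then 1 else 0) = m * (k / K) + min m (k % K) := by
  obtain rfl | hK := K.eq_zero_or_pos
  · obtain rfl : m = 0 := Nat.le_zero.mp hm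
    simp
  induction k with
  | zero => simp
  | succ k ih =>
    rw [sum_range_succ, ih]
    have hk := Nat.div_add_mod k K
    have hk1 := Nat.div_add_mod (k + 1) K
    by_cases hdvd : K ∣ k + 1
    · rw [Nat.succ_div_of_dvd hdvd, Nat.mod_eq_zero_of_dvd hdvd, mul_add] at hk1 ⊢
      split_ifs <;> omega
    · rw [Nat.succ_div_of_not_dvd hdvd] at hk1 ⊢
      split_ifs <;> omega

theorem sum_Ico_ite_mod_lt {K m : ℕ} (hm : m ≤ K) (k : ℕ) :
    ∑ i ∈ Ico k (k + K), (if i % K < m then 1 else 0) = m := by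
  obtain rfl | hK := K.eq_zero_or_pos
  · simp_all
  have hsplit := sum_range_add_sum_Ico (fun i => if i % K < m then 1 else 0) (k.le_add_right K)
  rw [sum_range_ite_mod_lt hm, sum_range_ite_mod_lt hm, Nat.add_div_right k hK,
    Nat.add_mod_right, mul_add] at hsplit
  omega

theorem stmt9_general (K mbar : ℕ) (hm : mbar ≤ K)
    (σ : ℕ → ℕ) (hσ : ∀ k, σ k = if k % K < mbar then 1 else 0) :
    (∀ k, ∑ i ∈ Finset.Ico k (k + K), σ i ≤ mbar) ∧
    (∀ k, ∑ i ∈ Finset.range k, σ i = mbar * (k / K) + min mbar (k % K)) := by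
  obtain rfl : σ = fun k => if k % K < mbar then 1 else 0 := funext hσ
  exact ⟨fun k => (sum_Ico_ite_mod_lt hm k).le, sum_range_ite_mod_lt hm⟩

/-- Tightness of the skip-count bound: the sequence `σ_k = 1` iff `k mod K < m̄`
satisfies the `(m,K)`-constraint and attains the skip-count bound with equality. -/
theorem stmt9 (K mbar : ℕ) (hK : 1 ≤ K) (hm : mbar ≤ K)
    (σ : ℕ → ℕ) (hσ : ∀ k, σ k = if k % K < mbar then 1 else 0) :
    (∀ k, ∑ i ∈ Finset.Ico k (k + K), σ i ≤ mbar) ∧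
    (∀ k, ∑ i ∈ Finset.range k, σ i = mbar * (k / K) + min mbar (k % K)) :=
  stmt9_general K mbar hm σ hσ
end

section
/- (Growth-factor bound under (m,K)-weak execution.) Let K ≥ 1 and m̄ ≥ 0 be natural numbers, let σ : ℕ₀ → {0,1} satisfy the (m,K)-constraint (for every k, Σ_{i=k}^{k+K−1} σ_i ≤ m̄), and let 0 < ρ₀ ≤ ρ₁ be real numbers. Define ρ_{σ_i} := ρ₀ if σ_i = 0 and ρ₁ if σ_i = 1. Then for every k ∈ ℕ₀: ∏_{i=0}^{k−1} ρ_{σ_i} ≤ ρ₀^k (ρ₁/ρ₀)^{m̄ ⌊k/K⌋ + min(m̄, k mod K)}. -/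
/-!
Each factor equals `ρ₀ * (ρ₁ / ρ₀) ^ σ i`, so the product is `ρ₀ ^ k * (ρ₁ / ρ₀) ^ s` with `s`
the number of skips among the first `k` steps, and since `ρ₁ / ρ₀ ≥ 1` it suffices to bound `s`.
Writing `k = q * K + r` with `r < K`, the first `r` steps contain at most `min m̄ r` skips and
each of the following `q` windows of length `K` at most `m̄`.
-/

open Finset

section WindowSums

variable {K mbar : ℕ} {σ : ℕ → ℕ}

theorem sum_range_add_mul_le_of_window_sum_le
    (hmk : ∀ k, ∑ i ∈ Ico k (k + K), σ i ≤ mbar) (n q : ℕ) :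
    ∑ i ∈ range (n + q * K), σ i ≤ ∑ i ∈ range n, σ i + mbar * q := by
  induction q with
  | zero => simp
  | succ q ih =>
    have hsplit : ∑ i ∈ range (n + (q + 1) * K), σ i
        = ∑ i ∈ range (n + q * K), σ i + ∑ i ∈ Ico (n + q * K) (n + q * K + K), σ i := by
      rw [range_eq_Ico, range_eq_Ico, sum_Ico_consecutive _ (Nat.zero_le _) (by omega)]
      ring_nf
    calc ∑ i ∈ range (n + (q + 1) * K), σ i
        ≤ (∑ i ∈ range n, σ i + mbar * q) + mbar := hsplit ▸ Nat.add_le_add ih (hmk _)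
      _ = ∑ i ∈ range n, σ i + mbar * (q + 1) := by ring

theorem sum_range_le_min_of_window_sum_le (hσ : ∀ i, σ i ≤ 1)
    (hmk : ∀ k, ∑ i ∈ Ico k (k + K), σ i ≤ mbar) {r : ℕ} (hr : r ≤ K) :
    ∑ i ∈ range r, σ i ≤ min mbar r := by
  refine le_min ?_ ?_
  · calc ∑ i ∈ range r, σ i ≤ ∑ i ∈ range K, σ i :=
          sum_le_sum_of_subset (range_subset_range.2 hr)
      _ ≤ mbar := by simpa only [zero_add, ← range_eq_Ico] using hmk 0
  · calc ∑ i ∈ range r, σ i ≤ ∑ _i ∈ range r, 1 := sum_le_sum fun i _ => hσ i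
      _ = r := by simp

theorem sum_range_le_of_window_sum_le (hK : 1 ≤ K) (hσ : ∀ i, σ i ≤ 1)
    (hmk : ∀ k, ∑ i ∈ Ico k (k + K), σ i ≤ mbar) (k : ℕ) :
    ∑ i ∈ range k, σ i ≤ mbar * (k / K) + min mbar (k % K) := by
  have hr : k % K ≤ K := (Nat.mod_lt k hK).le
  calc ∑ i ∈ range k, σ i = ∑ i ∈ range (k % K + k / K * K), σ i := by rw [Nat.mod_add_div']
    _ ≤ ∑ i ∈ range (k % K), σ i + mbar * (k / K) :=
      sum_range_add_mul_le_of_window_sum_le hmk _ _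
    _ ≤ min mbar (k % K) + mbar * (k / K) := by
      gcongr; exact sum_range_le_min_of_window_sum_le hσ hmk hr
    _ = mbar * (k / K) + min mbar (k % K) := add_comm _ _

end WindowSums

theorem prod_ite_eq_zero_eq_mul_div_pow_sum {ι : Type*} (s : Finset ι) (σ : ι → ℕ)
    (hσ : ∀ i, σ i ≤ 1) {ρ₀ ρ₁ : ℝ} (h0 : ρ₀ ≠ 0) :
    (∏ i ∈ s, if σ i = 0 then ρ₀ else ρ₁) = ρ₀ ^ #s * (ρ₁ / ρ₀) ^ (∑ i ∈ s, σ i) := by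
  have hfac : ∀ i, (if σ i = 0 then ρ₀ else ρ₁) = ρ₀ * (ρ₁ / ρ₀) ^ σ i := by
    intro i
    rcases Nat.le_one_iff_eq_zero_or_eq_one.1 (hσ i) with h | h
    · simp [h]
    · simp [h, mul_div_cancel₀ _ h0]
  simp only [hfac, prod_mul_distrib, prod_const, prod_pow_eq_pow_sum]

/-- Growth-factor bound under `(m,K)`-weak execution: with rates `0 < ρ₀ ≤ ρ₁` assigned
to nominal (`σ_i = 0`) and skipped (`σ_i = 1`) steps,
`∏_{i<k} ρ_{σ_i} ≤ ρ₀^k (ρ₁/ρ₀)^{m̄ ⌊k/K⌋ + min(m̄, k mod K)}`. -/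
theorem stmt11 (K mbar : ℕ) (hK : 1 ≤ K)
    (σ : ℕ → ℕ) (hσ : ∀ i, σ i ≤ 1)
    (hmk : ∀ k, ∑ i ∈ Finset.Ico k (k + K), σ i ≤ mbar)
    (ρ₀ ρ₁ : ℝ) (h0 : 0 < ρ₀) (h01 : ρ₀ ≤ ρ₁) :
    ∀ k, (∏ i ∈ Finset.range k, if σ i = 0 then ρ₀ else ρ₁) ≤
      ρ₀ ^ k * (ρ₁ / ρ₀) ^ (mbar * (k / K) + min mbar (k % K)) := by
  intro k
  rw [prod_ite_eq_zero_eq_mul_div_pow_sum _ σ hσ h0.ne', card_range]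
  have hratio : 1 ≤ ρ₁ / ρ₀ := (one_le_div h0).2 h01
  gcongr
  exact sum_range_le_of_window_sum_le hK hσ hmk k
end

section
/- (Overshoot bound for the (m,K) growth-factor envelope.) Let K ≥ 1 and 0 ≤ m̄ ≤ K be natural numbers and let 0 < ρ₀ ≤ ρ₁ be real numbers. Define ρ̃ := ρ₀^{(K−m̄)/K} ρ₁^{m̄/K} and κ̄_{0,k} := ρ₀^k (ρ₁/ρ₀)^{m̄ ⌊k/K⌋ + min(m̄, k mod K)}. Then for every k ∈ ℕ₀: κ̄_{0,k} ≤ (ρ₁/ρ₀)^{m̄} ρ̃^k; equivalently, sup_{k ∈ ℕ₀} ρ̃^{−k} κ̄_{0,k} ≤ (ρ₁/ρ₀)^{m̄}. -/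
/-!
Write `r = ρ₁/ρ₀ ≥ 1`, so that `ρ̃ = ρ₀ r^{m̄/K}` and `ρ̃^k = ρ₀^k r^{m̄k/K}`. The claim then reduces
to comparing exponents of `r`: `m̄ ⌊k/K⌋ + min(m̄, k mod K) ≤ m̄ k/K + m̄`, which holds because
`⌊k/K⌋ ≤ k/K` and `min(m̄, k mod K) ≤ m̄`.
-/

open Real

lemma rpow_one_sub_mul_rpow {a b : ℝ} (ha : 0 < a) (hb : 0 ≤ b) (t : ℝ) :
    a ^ (1 - t) * b ^ t = a * (b / a) ^ t := by
  rw [rpow_sub ha, rpow_one, div_rpow hb ha.le]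
  field_simp

lemma envelope_rate_eq {K : ℕ} (hK : K ≠ 0) (m : ℕ) {ρ₀ ρ₁ : ℝ} (h0 : 0 < ρ₀) (h1 : 0 ≤ ρ₁) :
    ρ₀ ^ (((K : ℝ) - m) / K) * ρ₁ ^ ((m : ℝ) / K) = ρ₀ * (ρ₁ / ρ₀) ^ ((m : ℝ) / K) := by
  have hK' : (K : ℝ) ≠ 0 := Nat.cast_ne_zero.mpr hK
  rw [sub_div, div_self hK', rpow_one_sub_mul_rpow h0 h1]

lemma cast_mul_div_add_min_mod_le (K m k : ℕ) :
    ((m * (k / K) + min m (k % K) : ℕ) : ℝ) ≤ m + m * k / K := by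
  have hdiv : ((k / K : ℕ) : ℝ) ≤ k / K := Nat.cast_div_le
  have hmin : ((min m (k % K) : ℕ) : ℝ) ≤ m := by exact_mod_cast min_le_left m (k % K)
  push_cast at hmin ⊢
  rw [mul_div_assoc]
  nlinarith [(Nat.cast_nonneg m : (0 : ℝ) ≤ m)]

lemma pow_mul_pow_mul_div_add_min_mod_le {ρ r : ℝ} (hρ : 0 < ρ) (hr : 1 ≤ r) (K m k : ℕ) :
    ρ ^ k * r ^ (m * (k / K) + min m (k % K)) ≤ r ^ m * (ρ * r ^ ((m : ℝ) / K)) ^ k := by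
  have hr0 : 0 < r := zero_lt_one.trans_le hr
  have hpow : r ^ m * (ρ * r ^ ((m : ℝ) / K)) ^ k = ρ ^ k * r ^ ((m : ℝ) + m * k / K) := by
    rw [mul_pow, ← rpow_natCast (r ^ _) k, ← rpow_mul hr0.le, rpow_add hr0, rpow_natCast]
    ring_nf
  rw [hpow, ← rpow_natCast r]
  gcongr
  exact cast_mul_div_add_min_mod_le K m k

theorem stmt12_general (K mbar : ℕ) (hK : 1 ≤ K)
    (ρ₀ ρ₁ : ℝ) (h0 : 0 < ρ₀) (h01 : ρ₀ ≤ ρ₁) :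
    (∀ k : ℕ,
      ρ₀ ^ k * (ρ₁ / ρ₀) ^ (mbar * (k / K) + min mbar (k % K)) ≤
        (ρ₁ / ρ₀) ^ mbar *
          (ρ₀ ^ (((K : ℝ) - (mbar : ℝ)) / (K : ℝ)) * ρ₁ ^ ((mbar : ℝ) / (K : ℝ))) ^ k) ∧
    (⨆ k : ℕ,
      ((ρ₀ ^ (((K : ℝ) - (mbar : ℝ)) / (K : ℝ)) * ρ₁ ^ ((mbar : ℝ) / (K : ℝ))) ^ k)⁻¹ *
        (ρ₀ ^ k * (ρ₁ / ρ₀) ^ (mbar * (k / K) + min mbar (k % K)))) ≤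
      (ρ₁ / ρ₀) ^ mbar := by
  have hr : 1 ≤ ρ₁ / ρ₀ := (one_le_div h0).mpr h01
  rw [envelope_rate_eq (by omega) mbar h0 (h0.le.trans h01)]
  have hbound := pow_mul_pow_mul_div_add_min_mod_le h0 hr K mbar
  have hrate : 0 < ρ₀ * (ρ₁ / ρ₀) ^ ((mbar : ℝ) / K) :=
    mul_pos h0 (rpow_pos_of_pos (zero_lt_one.trans_le hr) _)
  refine ⟨hbound, ciSup_le fun k => ?_⟩
  rw [inv_mul_le_iff₀ (pow_pos hrate k)]
  exact (hbound k).trans_eq (mul_comm _ _)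

/-- Overshoot bound for the `(m,K)` growth-factor envelope: with
`ρ̃ = ρ₀^{(K−m̄)/K} ρ₁^{m̄/K}` and
`κ̄_{0,k} = ρ₀^k (ρ₁/ρ₀)^{m̄ ⌊k/K⌋ + min(m̄, k mod K)}`, one has
`κ̄_{0,k} ≤ (ρ₁/ρ₀)^m̄ ρ̃^k` for all `k`; equivalently
`sup_k ρ̃^{−k} κ̄_{0,k} ≤ (ρ₁/ρ₀)^m̄`. -/
theorem stmt12 (K mbar : ℕ) (hK : 1 ≤ K) (hm : mbar ≤ K)
    (ρ₀ ρ₁ : ℝ) (h0 : 0 < ρ₀) (h01 : ρ₀ ≤ ρ₁) :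
    (∀ k : ℕ,
      ρ₀ ^ k * (ρ₁ / ρ₀) ^ (mbar * (k / K) + min mbar (k % K)) ≤
        (ρ₁ / ρ₀) ^ mbar *
          (ρ₀ ^ (((K : ℝ) - (mbar : ℝ)) / (K : ℝ)) * ρ₁ ^ ((mbar : ℝ) / (K : ℝ))) ^ k) ∧
    (⨆ k : ℕ,
      ((ρ₀ ^ (((K : ℝ) - (mbar : ℝ)) / (K : ℝ)) * ρ₁ ^ ((mbar : ℝ) / (K : ℝ))) ^ k)⁻¹ *
        (ρ₀ ^ k * (ρ₁ / ρ₀) ^ (mbar * (k / K) + min mbar (k % K)))) ≤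
      (ρ₁ / ρ₀) ^ mbar :=
  stmt12_general K mbar hK ρ₀ ρ₁ h0 h01
end

section
/- (Counterexample: instability under (2,4)-weak execution.) Let a = 1/2 and c = 1000, and define the real 3×3 matrices A₀ with rows (a,0,a),(0,0,0),(0,0,0) and A₁ with rows (a,0,0),(c,0,0),(0,1,0). Define the 4-periodic sequence σ : ℕ₀ → {0,1} by (σ_0,σ_1,σ_2,σ_3) = (0,0,1,1) and σ_{k+4} = σ_k, and the transition matrices Φ_0 = I, Φ_{k+1} = A_{σ_k} Φ_k. Then: (i) σ satisfies the (2,4)-constraint, i.e. Σ_{i=k}^{k+3} σ_i ≤ 2 for all k; and (ii) there exists x₀ ∈ ℝ³ with x₀ ≠ 0 such that Φ_{4i} x₀ = (a⁴ + c·a²)^i x₀ for all i ∈ ℕ₀, and hence |Φ_{4i} x₀| = (4001/16)^i |x₀| is unbounded as i → ∞, so the switched system x_{k+1} = A_{σ_k} x_k is not exponentially stable under (2,4)-weak execution. -/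
/-!
Over one period the transition matrix is `A₁ A₁ A₀ A₀`, which sends `x` to
`a² (x₁ + x₃) • (a², a c, c)`. This rank-one matrix has `w = (a², a c, c)` as eigenvector
with eigenvalue `a² (a² + c) = 4001/16 > 1`, so `Φ_{4i} w` grows geometrically, which no bound
`C ρ^k` with `ρ < 1` allows. The `(2,4)`-constraint holds because every window of length 4 of a
4-periodic sequence has the same sum as one period `(0, 0, 1, 1)`.
-/

open Finset Matrix

theorem Function.Periodic.sum_Ico_add_period {M : Type*} [AddCommMonoid M] {f : ℕ → M} {p : ℕ}
    (hf : Function.Periodic f p) (n : ℕ) :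
    ∑ i ∈ Ico n (n + p), f i = ∑ i ∈ range p, f i := by
  rw [Finset.sum_eq_multiset_sum, Finset.sum_eq_multiset_sum, Finset.range_val,
    ← Nat.multiset_Ico_map_mod n p, Multiset.map_map]
  exact congrArg Multiset.sum (Multiset.map_congr rfl fun i _ => (hf.map_mod_nat i).symm)

theorem eq_pow_mul_of_succ_eq_mul {M : Type*} [Monoid M] {u : ℕ → M} {g : M}
    (h : ∀ i, u (i + 1) = g * u i) (i : ℕ) : u i = g ^ i * u 0 := by
  induction i with
  | zero => simp
  | succ i ih => rw [h, ih, pow_succ', mul_assoc]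

theorem not_exists_exp_bound_of_norm_eq_pow {E : Type*} [NormedAddCommGroup E]
    (T : ℕ → E → E) {x : E} (hx : x ≠ 0) {p : ℕ} {μ : ℝ} (hμ : 1 < μ)
    (h : ∀ i, ‖T (p * i) x‖ = μ ^ i * ‖x‖) :
    ¬ ∃ C ρ : ℝ, ρ < 1 ∧ ∀ k, ‖T k x‖ ≤ C * ρ ^ k * ‖x‖ := by
  rintro ⟨C, ρ, hρ, hbound⟩
  have hx : 0 < ‖x‖ := norm_pos_iff.2 hx
  have hC : 1 ≤ C := by
    have := (h 0).symm.trans_le (hbound (p * 0))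
    simp only [pow_zero, one_mul, mul_zero, mul_one] at this
    nlinarith
  have hρ₀ : 0 ≤ ρ := by
    have := (norm_nonneg _).trans (hbound 1)
    rw [pow_one] at this
    nlinarith [mul_pos (zero_lt_one.trans_le hC) hx]
  obtain ⟨i, hi⟩ := pow_unbounded_of_one_lt C hμ
  have : μ ^ i * ‖x‖ ≤ C * ‖x‖ :=
    calc μ ^ i * ‖x‖ = ‖T (p * i) x‖ := (h i).symm
      _ ≤ C * ρ ^ (p * i) * ‖x‖ := hbound _
      _ ≤ C * ‖x‖ := by gcongr; nlinarith [pow_le_one₀ hρ₀ hρ.le (n := p * i)]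
  nlinarith

theorem skipPeriod_mulVec_eq_smul (a c : ℝ) :
    (!![a, 0, 0; c, 0, 0; 0, 1, 0] * !![a, 0, 0; c, 0, 0; 0, 1, 0] *
      !![a, 0, a; 0, 0, 0; 0, 0, 0] * !![a, 0, a; 0, 0, 0; 0, 0, 0]) *ᵥ ![a ^ 2, a * c, c] =
      (a ^ 4 + c * a ^ 2) • ![a ^ 2, a * c, c] := by
  ext j
  fin_cases j <;> simp [mulVec, dotProduct, Fin.sum_univ_succ] <;> ring

/-- Counterexample, instability under `(2,4)`-weak execution: with `a = 1/2`, `c = 1000`,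
the 4-periodic skip pattern `(0,0,1,1)` satisfies the `(2,4)`-constraint, yet there is a
nonzero `x₀` with `Φ_{4i} x₀ = (a⁴ + c·a²)^i x₀`, hence
`|Φ_{4i} x₀| = (4001/16)^i |x₀|` grows unboundedly and the switched system is not
exponentially stable. -/
theorem stmt17 (a c : ℝ) (ha : a = 1 / 2) (hc : c = 1000)
    (A₀ A₁ : Matrix (Fin 3) (Fin 3) ℝ)
    (hA₀ : A₀ = !![a, 0, a; 0, 0, 0; 0, 0, 0])
    (hA₁ : A₁ = !![a, 0, 0; c, 0, 0; 0, 1, 0])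
    (σ : ℕ → ℕ)
    (hσdef : ∀ k, σ k = if k % 4 = 2 ∨ k % 4 = 3 then 1 else 0)
    (Φ : ℕ → Matrix (Fin 3) (Fin 3) ℝ)
    (hΦ0 : Φ 0 = 1)
    (hΦ : ∀ k, Φ (k + 1) = (if σ k = 0 then A₀ else A₁) * Φ k) :
    (∀ k, ∑ i ∈ Finset.Ico k (k + 4), σ i ≤ 2) ∧
    (∃ x₀ : EuclideanSpace ℝ (Fin 3), x₀ ≠ 0 ∧
      (∀ i : ℕ, Matrix.toEuclideanCLM (𝕜 := ℝ) (Φ (4 * i)) x₀ =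
        (a ^ 4 + c * a ^ 2) ^ i • x₀) ∧
      (∀ i : ℕ, ‖Matrix.toEuclideanCLM (𝕜 := ℝ) (Φ (4 * i)) x₀‖ =
        ((4001 : ℝ) / 16) ^ i * ‖x₀‖)) ∧
    ¬ ∃ (C ρ : ℝ), ρ < 1 ∧
        ∀ (x : EuclideanSpace ℝ (Fin 3)) (k : ℕ),
          ‖Matrix.toEuclideanCLM (𝕜 := ℝ) (Φ k) x‖ ≤ C * ρ ^ k * ‖x‖ := by
  have hσ_periodic : Function.Periodic σ 4 := fun k => by simp only [hσdef, Nat.add_mod_right]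
  have hσ_window (k : ℕ) : ∑ i ∈ Ico k (k + 4), σ i ≤ 2 := by
    rw [hσ_periodic.sum_Ico_add_period]
    simp only [sum_range_succ, sum_range_zero, hσdef]
    norm_num
  have hΦ_period (i : ℕ) : Φ (4 * (i + 1)) = A₁ * A₁ * A₀ * A₀ * Φ (4 * i) := by
    have hσ (j : ℕ) : σ (4 * i + j) = σ j := by simp only [hσdef, Nat.mul_add_mod]
    simp only [show 4 * (i + 1) = 4 * i + 3 + 1 by ring, hΦ, hσ, hσdef, mul_assoc]
    norm_num
  set w : Fin 3 → ℝ := ![a ^ 2, a * c, c]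
  have hw : w ≠ 0 := fun h => by simpa [ha, w] using congrFun h 0
  have hw_eigen :
      Module.End.HasEigenvector (toLin' (A₁ * A₁ * A₀ * A₀)) (a ^ 4 + c * a ^ 2) w := by
    refine Module.End.hasEigenvector_iff.2 ⟨Module.End.mem_eigenspace_iff.2 ?_, hw⟩
    rw [toLin'_apply, hA₀, hA₁]
    exact skipPeriod_mulVec_eq_smul a c
  have hx₀ (i : ℕ) : toEuclideanCLM (𝕜 := ℝ) (Φ (4 * i)) (WithLp.toLp 2 w) =
      (a ^ 4 + c * a ^ 2) ^ i • WithLp.toLp 2 w := by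
    rw [eq_pow_mul_of_succ_eq_mul (u := fun i => Φ (4 * i)) hΦ_period, hΦ0, mul_one,
      toEuclideanCLM_toLp, ← toLin'_apply, toLin'_pow, hw_eigen.pow_apply, WithLp.toLp_smul]
  have hμ : a ^ 4 + c * a ^ 2 = 4001 / 16 := by norm_num [ha, hc]
  have hx₀_norm (i : ℕ) : ‖toEuclideanCLM (𝕜 := ℝ) (Φ (4 * i)) (WithLp.toLp 2 w)‖ =
      (4001 / 16 : ℝ) ^ i * ‖WithLp.toLp 2 w‖ := by
    rw [hx₀, norm_smul, hμ, norm_pow, Real.norm_of_nonneg (by norm_num)]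
  have hx₀_ne : WithLp.toLp 2 w ≠ 0 := by simpa using hw
  refine ⟨hσ_window, ⟨_, hx₀_ne, hx₀, hx₀_norm⟩, ?_⟩
  rintro ⟨C, ρ, hρ, hbound⟩
  exact not_exists_exp_bound_of_norm_eq_pow (fun k => toEuclideanCLM (𝕜 := ℝ) (Φ k))
    hx₀_ne (by norm_num) hx₀_norm ⟨C, ρ, hρ, fun k => hbound _ k⟩
end

section
/- ((m,K)-weak stability for non-global exponential stability.) Let Σ be a set, σ : ℕ₀ → Σ, ρ : Σ → [0,∞), and define π_k := ∏_{i=0}^{k−1} ρ_{σ_i} (empty product = 1). Let α ≥ 1, α̃ ≥ 1, ρ̃ ∈ (0,1] with π_k ≤ α̃ ρ̃^k for all k ∈ ℕ₀, and let r₀ > 0. Let x : ℕ₀ → ℝⁿ satisfy |x_0| ≤ r₀ (α α̃)^{-1} and the conditional abstraction step: for every k ∈ ℕ₀, if |x_j| ≤ r₀ for all j ∈ {0,…,k}, then |x_{k+1}| ≤ α π_{k+1} |x_0|. Then for every k ∈ ℕ₀: |x_k| ≤ α α̃ ρ̃^k |x_0| ≤ r₀. -/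
/-!
Along the trajectory the bound `α α̃ ρ̃ᵏ |x₀|` never exceeds `α α̃ |x₀| ≤ r₀`, so it keeps the
trajectory inside the ball of radius `r₀`. Strong induction then bootstraps: once `x₀, …, x_k`
obey the bound they lie in the ball, the abstraction step applies, and `π_{k+1} ≤ α̃ ρ̃^{k+1}`
gives the bound for `x_{k+1}`.
-/

theorem le_of_le_bound_of_conditional_step {β : Type*} [Preorder β] (u b : ℕ → β) (r : β)
    (hb : ∀ k, b k ≤ r) (h0 : u 0 ≤ b 0)
    (hstep : ∀ k, (∀ j ≤ k, u j ≤ r) → u (k + 1) ≤ b (k + 1)) :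
    ∀ k, u k ≤ b k := by
  intro k
  induction k using Nat.strong_induction_on with
  | _ k ih =>
    match k with
    | 0 => exact h0
    | k + 1 => exact hstep k fun j hj => (ih j (Nat.lt_succ_of_le hj)).trans (hb j)

theorem stmt18_general {n : ℕ} {S : Type*} (σ : ℕ → S) (ρ : S → ℝ)
    (α αt ρt r₀ : ℝ) (hα : 1 ≤ α) (hαt : 1 ≤ αt) (hρt0 : 0 < ρt) (hρt1 : ρt ≤ 1)
    (hκ : ∀ k, (∏ i ∈ Finset.range k, ρ (σ i)) ≤ αt * ρt ^ k)
    (x : ℕ → EuclideanSpace ℝ (Fin n))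
    (hx0 : ‖x 0‖ ≤ r₀ * (α * αt)⁻¹)
    (hstep : ∀ k, (∀ j, j ≤ k → ‖x j‖ ≤ r₀) →
      ‖x (k + 1)‖ ≤ α * (∏ i ∈ Finset.range (k + 1), ρ (σ i)) * ‖x 0‖) :
    ∀ k, ‖x k‖ ≤ α * αt * ρt ^ k * ‖x 0‖ ∧ α * αt * ρt ^ k * ‖x 0‖ ≤ r₀ := by
  have hααt : 1 ≤ α * αt := one_le_mul_of_one_le_of_one_le hα hαt
  have hx0_ball : α * αt * ‖x 0‖ ≤ r₀ := by
    rw [mul_comm]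
    exact (le_mul_inv_iff₀ (by positivity)).mp hx0
  have hbound : ∀ k, α * αt * ρt ^ k * ‖x 0‖ ≤ r₀ := fun k =>
    calc α * αt * ρt ^ k * ‖x 0‖ ≤ α * αt * 1 * ‖x 0‖ := by
          gcongr
          exact pow_le_one₀ hρt0.le hρt1
      _ ≤ r₀ := by rwa [mul_one]
  have hnorm := le_of_le_bound_of_conditional_step (fun k => ‖x k‖)
    (fun k => α * αt * ρt ^ k * ‖x 0‖) r₀ hbound
    (by simpa using le_mul_of_one_le_left (norm_nonneg _) hααt)
    fun k hk => calc
      ‖x (k + 1)‖ ≤ α * (∏ i ∈ Finset.range (k + 1), ρ (σ i)) * ‖x 0‖ := hstep k hk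
      _ ≤ α * (αt * ρt ^ (k + 1)) * ‖x 0‖ :=
        mul_le_mul_of_nonneg_right (mul_le_mul_of_nonneg_left (hκ _) (by linarith)) (norm_nonneg _)
      _ = α * αt * ρt ^ (k + 1) * ‖x 0‖ := by ring
  exact fun k => ⟨hnorm k, hbound k⟩

/-- `(m,K)`-weak stability for non-global exponential stability: with
`π_k = ∏_{i<k} ρ_{σ_i} ≤ α̃ ρ̃^k` (`α, α̃ ≥ 1`, `ρ̃ ∈ (0,1]`), initial condition
`|x_0| ≤ r₀ (α α̃)⁻¹`, and the conditional abstraction step (valid while the trajectory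
stays in the ball of radius `r₀`), one has `|x_k| ≤ α α̃ ρ̃^k |x_0| ≤ r₀` for all `k`. -/
theorem stmt18 {n : ℕ} {S : Type*} (σ : ℕ → S) (ρ : S → ℝ) (hρ : ∀ s, 0 ≤ ρ s)
    (α αt ρt r₀ : ℝ) (hα : 1 ≤ α) (hαt : 1 ≤ αt) (hρt0 : 0 < ρt) (hρt1 : ρt ≤ 1)
    (hκ : ∀ k, (∏ i ∈ Finset.range k, ρ (σ i)) ≤ αt * ρt ^ k)
    (hr : 0 < r₀)
    (x : ℕ → EuclideanSpace ℝ (Fin n))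
    (hx0 : ‖x 0‖ ≤ r₀ * (α * αt)⁻¹)
    (hstep : ∀ k, (∀ j, j ≤ k → ‖x j‖ ≤ r₀) →
      ‖x (k + 1)‖ ≤ α * (∏ i ∈ Finset.range (k + 1), ρ (σ i)) * ‖x 0‖) :
    ∀ k, ‖x k‖ ≤ α * αt * ρt ^ k * ‖x 0‖ ∧ α * αt * ρt ^ k * ‖x 0‖ ≤ r₀ :=
  stmt18_general σ ρ α αt ρt r₀ hα hαt hρt0 hρt1 hκ x hx0 hstep
end
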